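/- For nonnegative integers i ≥ j, ∑_{k=0}^{j} [j choose k]_q q^{(i-k)(j-k)} ∑_{m=0}^{k} (-1)^m q^{m(i-k+1)+binom(m,2)} [k choose m]_q = 1. -/
import Mathlib


open Finset

/-- The variable `q`, as a rational function over `ℚ`. -/
noncomputable def q : RatFunc ℚ := RatFunc.X

/-- The q-shifted factorial `(a; q)_k = (1-a)(1-aq)⋯(1-aq^{k-1})`. -/
noncomputable def qPoch (a : RatFunc ℚ) (k : ℕ) : RatFunc ℚ :=
  ∏ s ∈ Finset.range k, (1 - a * q ^ s)

/-- The Gaussian (q-binomial) coefficient `[j choose k]_q = (q;q)_j / ((q;q)_k (q;q)_{j-k})`. -/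
noncomputable def qbinom (j k : ℕ) : RatFunc ℚ :=
  qPoch q j / (qPoch q k * qPoch q (j - k))

lemma q_pow_ne_one (n : ℕ) : q ^ (n+1) ≠ 1 := by
  intro h
  have : (RatFunc.X : RatFunc ℚ) ^ (n+1) = 1 := h
  rw [← RatFunc.algebraMap_X (K := ℚ), ← map_pow, ← map_one (algebraMap (Polynomial ℚ) (RatFunc ℚ))] at this
  have h2 := RatFunc.algebraMap_injective (K := ℚ) this
  have := congrArg Polynomial.natDegree h2
  simp at this
lemma one_sub_q_pow_ne_zero (n : ℕ) : (1 : RatFunc ℚ) - q^(n+1) ≠ 0 := by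
  intro h
  exact q_pow_ne_one n (by linear_combination -h)

lemma qPoch_zero (a : RatFunc ℚ) : qPoch a 0 = 1 := by simp [qPoch]
lemma qPoch_q_succ (n : ℕ) : qPoch q (n+1) = qPoch q n * (1 - q^(n+1)) := by
  rw [qPoch, Finset.prod_range_succ, ← pow_succ']
  rfl
lemma qPoch_q_ne_zero (n : ℕ) : qPoch q n ≠ 0 := by
  induction n with
  | zero => simp [qPoch]
  | succ n ih => rw [qPoch_q_succ]; exact mul_ne_zero ih (one_sub_q_pow_ne_zero n)
lemma qPoch_succ_left (a : RatFunc ℚ) (k : ℕ) : qPoch a (k+1) = (1-a) * qPoch (a*q) k := by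
  rw [qPoch, Finset.prod_range_succ']
  simp only [pow_zero, mul_one, qPoch]
  rw [mul_comm]
  congr 1
  apply Finset.prod_congr rfl
  intro s _
  ring

lemma qbinom_zero (j : ℕ) : qbinom j 0 = 1 := by
  simp [qbinom, qPoch_zero, div_self (qPoch_q_ne_zero j)]
lemma qbinom_self (j : ℕ) : qbinom j j = 1 := by
  simp [qbinom, qPoch_zero, div_self (qPoch_q_ne_zero j)]

noncomputable def qb' (j k : ℕ) : RatFunc ℚ := if k ≤ j then qbinom j k else 0

lemma qb'_zero (j : ℕ) : qb' j 0 = 1 := by simp [qb', qbinom_zero]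
lemma qb'_self (j : ℕ) : qb' j j = 1 := by simp [qb', qbinom_self]
lemma qb'_of_gt {j k : ℕ} (h : j < k) : qb' j k = 0 := by simp [qb', not_le.mpr h]

-- core Pascal on qbinom for k < n, written with n = k + d + 1
lemma qbinom_pascal_aux (k d : ℕ) :
    qbinom (k+d+2) (k+1) = q^(k+1) * qbinom (k+d+1) (k+1) + qbinom (k+d+1) k := by
  have e1 : k+d+2 - (k+1) = d+1 := by omega
  have e2 : k+d+1 - (k+1) = d := by omega
  have e3 : k+d+1 - k = d+1 := by omega
  rw [qbinom, qbinom, qbinom, e1, e2, e3]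
  have f1 : qPoch q (k+d+2) = qPoch q (k+d+1) * (1 - q^(k+d+2)) := qPoch_q_succ _
  have f2 : qPoch q (d+1) = qPoch q d * (1 - q^(d+1)) := qPoch_q_succ _
  have f3 : qPoch q (k+1) = qPoch q k * (1 - q^(k+1)) := qPoch_q_succ _
  rw [f1, f2, f3]
  field_simp [qPoch_q_ne_zero, one_sub_q_pow_ne_zero]
  ring

lemma qbinom_pascal_aux2 (k d : ℕ) :
    qbinom (k+d+2) (k+1) = qbinom (k+d+1) (k+1) + q^(d+1) * qbinom (k+d+1) k := by
  have e1 : k+d+2 - (k+1) = d+1 := by omega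
  have e2 : k+d+1 - (k+1) = d := by omega
  have e3 : k+d+1 - k = d+1 := by omega
  rw [qbinom, qbinom, qbinom, e1, e2, e3]
  have f1 : qPoch q (k+d+2) = qPoch q (k+d+1) * (1 - q^(k+d+2)) := qPoch_q_succ _
  have f2 : qPoch q (d+1) = qPoch q d * (1 - q^(d+1)) := qPoch_q_succ _
  have f3 : qPoch q (k+1) = qPoch q k * (1 - q^(k+1)) := qPoch_q_succ _
  rw [f1, f2, f3]
  field_simp [qPoch_q_ne_zero, one_sub_q_pow_ne_zero]
  ring

lemma qb'_pascal1 (n m : ℕ) : qb' (n+1) (m+1) = q^(m+1) * qb' n (m+1) + qb' n m := by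
  rcases lt_trichotomy m n with h | h | h
  · obtain ⟨d, rfl⟩ : ∃ d, n = m + d + 1 := ⟨n - m - 1, by omega⟩
    have h1 : qb' (m+d+2) (m+1) = qbinom (m+d+2) (m+1) := by simp [qb', (show m+1 ≤ m+d+2 by omega)]
    have h2 : qb' (m+d+1) (m+1) = qbinom (m+d+1) (m+1) := by simp [qb', (show m+1 ≤ m+d+1 by omega)]
    have h3 : qb' (m+d+1) m = qbinom (m+d+1) m := by simp [qb', (show m ≤ m+d+1 by omega)]
    rw [show m+d+1+1 = m+d+2 from rfl, h1, h2, h3, qbinom_pascal_aux]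
  · subst h
    rw [qb'_self, qb'_self, qb'_of_gt (by omega)]
    ring
  · rw [qb'_of_gt (by omega), qb'_of_gt (by omega), qb'_of_gt (by omega)]
    ring

lemma qb'_pascal2 (n k : ℕ) : qb' (n+1) (k+1) = qb' n (k+1) + q^(n-k) * qb' n k := by
  rcases lt_trichotomy k n with h | h | h
  · obtain ⟨d, rfl⟩ : ∃ d, n = k + d + 1 := ⟨n - k - 1, by omega⟩
    have h1 : qb' (k+d+2) (k+1) = qbinom (k+d+2) (k+1) := by simp [qb', (show k+1 ≤ k+d+2 by omega)]
    have h2 : qb' (k+d+1) (k+1) = qbinom (k+d+1) (k+1) := by simp [qb', (show k+1 ≤ k+d+1 by omega)]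
    have h3 : qb' (k+d+1) k = qbinom (k+d+1) k := by simp [qb', (show k ≤ k+d+1 by omega)]
    have e : k+d+1-k = d+1 := by omega
    rw [show k+d+1+1 = k+d+2 from rfl, h1, h2, h3, e, qbinom_pascal_aux2]
  · subst h
    rw [qb'_self, qb'_self, qb'_of_gt (by omega)]
    simp
  · rw [qb'_of_gt (by omega), qb'_of_gt (by omega), qb'_of_gt (by omega)]
    ring

lemma halfstep (m : ℕ) : (m+1)*m/2 = m*(m-1)/2 + m := by
  have h1 : (m+1).choose 2 = (m+1)*m/2 := by rw [Nat.choose_two_right]; simp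
  have h2 : m.choose 2 = m*(m-1)/2 := Nat.choose_two_right m
  rw [← h1, ← h2, Nat.choose_succ_succ, Nat.choose_one_right, Nat.add_comm]

lemma qbt (k : ℕ) : ∀ N : ℕ,
    ∑ m ∈ Finset.range (k+1), (-1 : RatFunc ℚ)^m * q^(m*N + m*(m-1)/2) * qb' k m
      = qPoch (q^N) k := by
  induction k with
  | zero => intro N; simp [qPoch_zero, qb'_zero]
  | succ k ih =>
    intro N
    rw [Finset.sum_range_succ']
    have step : ∀ m ∈ Finset.range (k+1),
        (-1 : RatFunc ℚ)^(m+1) * q^((m+1)*N + (m+1)*((m+1)-1)/2) * qb' (k+1) (m+1)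
        = ((-1 : RatFunc ℚ)^(m+1) * q^((m+1)*(N+1) + (m+1)*((m+1)-1)/2) * qb' k (m+1))
          + (-q^N) * ((-1 : RatFunc ℚ)^m * q^(m*(N+1) + m*(m-1)/2) * qb' k m) := by
      intro m _
      rw [qb'_pascal1]
      have e1 : (m+1)*(N+1) + (m+1)*((m+1)-1)/2 = ((m+1)*N + (m+1)*((m+1)-1)/2) + (m+1) := by
        rw [Nat.mul_succ]; ring
      have e2 : (m+1)*N + (m+1)*((m+1)-1)/2 = N + (m*(N+1) + m*(m-1)/2) := by
        have h : (m+1)*((m+1)-1)/2 = m*(m-1)/2 + m := by simpa using halfstep m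
        rw [h, Nat.succ_mul, Nat.mul_succ]; ring
      rw [e1, pow_add q _ (m+1), pow_succ (-1 : RatFunc ℚ) m]
      rw [e2, pow_add q N _]
      ring
    rw [Finset.sum_congr rfl step, Finset.sum_add_distrib, ← Finset.mul_sum, ih (N+1)]
    have first : ∑ m ∈ Finset.range (k+1),
        (-1 : RatFunc ℚ)^(m+1) * q^((m+1)*(N+1) + (m+1)*((m+1)-1)/2) * qb' k (m+1)
        = qPoch (q^(N+1)) k - 1 := by
      have peel := Finset.sum_range_succ'
        (fun m => (-1 : RatFunc ℚ)^m * q^(m*(N+1) + m*(m-1)/2) * qb' k m) (k+1)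
      have htop : ∑ m ∈ Finset.range (k+1+1),
            (-1 : RatFunc ℚ)^m * q^(m*(N+1) + m*(m-1)/2) * qb' k m
          = qPoch (q^(N+1)) k := by
        rw [Finset.sum_range_succ, qb'_of_gt (by omega : k < k+1), ih (N+1)]
        ring
      rw [htop] at peel
      simp only [qb'_zero] at peel
      have h0 : ((-1 : RatFunc ℚ)^0 * q^(0*(N+1) + 0*(0-1)/2) * 1) = 1 := by norm_num
      rw [h0] at peel
      linear_combination -peel
    rw [first, qb'_zero, qPoch_succ_left, ← pow_succ]
    norm_num
    ring

lemma outer (i : ℕ) : ∀ j, j ≤ i →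
    ∑ k ∈ Finset.range (j+1), qb' j k * q^((i-k)*(j-k)) * qPoch (q^(i-k+1)) k = 1 := by
  intro j
  induction j with
  | zero => intro _; simp [qb'_zero, qPoch_zero]
  | succ j ih =>
    intro h
    have hji : j ≤ i := by omega
    rw [Finset.sum_range_succ']
    have step : ∀ m ∈ Finset.range (j+1),
        qb' (j+1) (m+1) * q^((i-(m+1))*(j+1-(m+1))) * qPoch (q^(i-(m+1)+1)) (m+1)
        = qb' j (m+1) * q^((i-(m+1))*(j+1-(m+1))) * qPoch (q^(i-(m+1)+1)) (m+1)
          + (qb' j m * q^((i-m)*(j-m)) * qPoch (q^(i-m+1)) m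
             - qb' j m * q^((i-m)*(j+1-m)) * qPoch (q^(i-m+1)) m) := by
      intro m hm
      have hmj : m ≤ j := Nat.lt_succ_iff.mp (Finset.mem_range.mp hm)
      obtain ⟨a, ha⟩ : ∃ a, i - m = a + 1 := ⟨i - m - 1, by omega⟩
      have eA : i - (m+1) + 1 = i - m := by omega
      have eB : i - (m+1) = a := by omega
      have eC : j + 1 - (m+1) = j - m := by omega
      have eD : j + 1 - m = (j - m) + 1 := by omega
      rw [qb'_pascal2, eA, eB, eC, eD, ha, qPoch_succ_left, ← pow_succ]
      have p1 : (a+1)*(j-m) = (j-m) + a*(j-m) := by ring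
      have p2 : (a+1)*((j-m)+1) = ((j-m) + a*(j-m)) + (a+1) := by ring
      rw [p1, p2, pow_add q (j-m) (a*(j-m)), pow_add q ((j-m) + a*(j-m)) (a+1),
        pow_add q (j-m) (a*(j-m))]
      ring
    rw [Finset.sum_congr rfl step, Finset.sum_add_distrib, Finset.sum_sub_distrib, ih hji]
    have key : ∑ m ∈ Finset.range (j+1),
        qb' j (m+1) * q^((i-(m+1))*(j+1-(m+1))) * qPoch (q^(i-(m+1)+1)) (m+1)
        = (∑ k ∈ Finset.range (j+1), qb' j k * q^((i-k)*(j+1-k)) * qPoch (q^(i-k+1)) k)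
          - q^(i*(j+1)) := by
      have peel := Finset.sum_range_succ'
        (fun k => qb' j k * q^((i-k)*(j+1-k)) * qPoch (q^(i-k+1)) k) (j+1)
      rw [Finset.sum_range_succ _ (j+1), qb'_of_gt (show j < j+1 by omega)] at peel
      simp only [qb'_zero, qPoch_zero, Nat.sub_zero, one_mul, mul_one, zero_mul] at peel
      linear_combination -peel
    rw [key]
    simp only [qb'_zero, qPoch_zero, Nat.sub_zero, one_mul, mul_one]
    ring


/-- The Alladi–Gordon key identity rewritten via the q-binomial theorem
(`(a;q)_k = ∑_{m} (-1)^m [k choose m]_q q^{m(m-1)/2} a^m` with `a = q^{i-k+1}`) as a double sum: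
`∑_{k=0}^{j} [j choose k]_q q^{(i-k)(j-k)} ∑_{m=0}^{k} (-1)^m q^{m(i-k+1)+m(m-1)/2} [k choose m]_q = 1`. -/
theorem alladi_gordon_double_sum (i j : ℕ) (hji : j ≤ i) :
    ∑ k ∈ Finset.range (j + 1), qbinom j k * q ^ ((i - k) * (j - k)) *
      ∑ m ∈ Finset.range (k + 1),
        (-1 : RatFunc ℚ) ^ m * q ^ (m * (i - k + 1) + m * (m - 1) / 2) * qbinom k m = 1 := by
  have h1 : ∀ k ∈ Finset.range (j+1),
      qbinom j k * q ^ ((i - k) * (j - k)) *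
        (∑ m ∈ Finset.range (k + 1),
          (-1 : RatFunc ℚ) ^ m * q ^ (m * (i - k + 1) + m * (m - 1) / 2) * qbinom k m)
      = qb' j k * q^((i-k)*(j-k)) * qPoch (q^(i-k+1)) k := by
    intro k hk
    have hk' : k ≤ j := Nat.lt_succ_iff.mp (Finset.mem_range.mp hk)
    have hb : qbinom j k = qb' j k := by simp [qb', hk']
    rw [hb]
    congr 1
    rw [← qbt k (i-k+1)]
    apply Finset.sum_congr rfl
    intro m hm
    have hm' : m ≤ k := Nat.lt_succ_iff.mp (Finset.mem_range.mp hm)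
    simp [qb', hm']
  rw [Finset.sum_congr rfl h1]
  exact outer i j hji
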